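/- arXiv:1507.07025 — 2 statements merged into one kernel-verified Lean document; each statement's English description precedes it below -/
import Mathlib

section
/- If p - p' < √(p') for every prime p ≥ 131 (p' the previous prime before p), then for every positive integer m with m² > 131, the interval (m², (m+1)²) contains at least two primes. -/
/-!
Take the first prime `p` above `m² + m` and the last prime `q` at or below it, so that `q` is
the prime preceding `p`. If `q ≤ m²`, then `√q ≤ m` and the gap bound gives `p < q + m ≤ m² + m`,
which is absurd; hence `m² < q ≤ m² + m`. Now `√q < m + 1`, so `p < q + m + 1`, i.e.
`p ≤ m² + 2m < (m + 1)²`. Thus `q` and `p` are two primes in `(m², (m + 1)²)`.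
-/

def PrevPrime (p p' : ℕ) : Prop :=
  p'.Prime ∧ p' < p ∧ ∀ r : ℕ, r.Prime → r < p → r ≤ p'

theorem exists_prevPrime_le_lt {N : ℕ} (hN : 2 ≤ N) :
    ∃ p q : ℕ, p.Prime ∧ PrevPrime p q ∧ q ≤ N ∧ N < p := by
  classical
  have hex : ∃ p, p.Prime ∧ N < p := by
    obtain ⟨p, hNp, hp⟩ := Nat.exists_infinite_primes (N + 1)
    exact ⟨p, hp, hNp⟩
  obtain ⟨hp, hNp⟩ := Nat.find_spec hex
  have hq : (Nat.findGreatest Nat.Prime N).Prime := Nat.findGreatest_spec hN Nat.prime_two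
  have hqN : Nat.findGreatest Nat.Prime N ≤ N := Nat.findGreatest_le N
  refine ⟨Nat.find hex, Nat.findGreatest Nat.Prime N, hp, ⟨hq, by omega, ?_⟩, hqN, hNp⟩
  intro r hr hrp
  have hrN : r ≤ N := by
    by_contra! hNr
    exact Nat.find_min hex hrp ⟨hr, hNr⟩
  exact Nat.le_findGreatest hrN hr

theorem lt_add_of_sub_lt_sqrt {p q n : ℕ} (hgap : (p : ℝ) - q < √q) (hq : q ≤ n ^ 2) :
    p < q + n := by
  have hsqrt : √(q : ℝ) ≤ n := Real.sqrt_le_left (Nat.cast_nonneg n) |>.mpr (by exact_mod_cast hq)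
  have : (p : ℝ) < q + n := by linarith
  exact_mod_cast this

theorem stmt11
    (h : ∀ p p' : ℕ, p.Prime → 131 ≤ p → PrevPrime p p' → (p : ℝ) - p' < Real.sqrt p') :
    ∀ m : ℕ, 1 ≤ m → 131 < m ^ 2 →
      ∃ r s : ℕ, r.Prime ∧ s.Prime ∧ r ≠ s ∧
        m ^ 2 < r ∧ r < (m + 1) ^ 2 ∧ m ^ 2 < s ∧ s < (m + 1) ^ 2 := by
  intro m _ hm
  obtain ⟨p, q, hp, hpq, hqN, hNp⟩ := exists_prevPrime_le_lt (N := m ^ 2 + m) (by omega)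
  have hgap := h p q hp (by omega) hpq
  have hmq : m ^ 2 < q := by
    by_contra! hqm
    have := lt_add_of_sub_lt_sqrt hgap hqm
    omega
  have hpq' : p < q + (m + 1) := lt_add_of_sub_lt_sqrt hgap (by nlinarith)
  have hsq : (m + 1) ^ 2 = m ^ 2 + 2 * m + 1 := by ring
  exact ⟨q, p, hpq.1, hp, hpq.2.1.ne, hmq, by omega, by omega, by omega⟩
end

section
/- If p - p' < √(p') for every prime p ≥ 131 (p' the previous prime), then for every integer n ≥ 131 the interval (n - √n, n) contains a prime. -/
theorem exists_prevPrime {p : ℕ} (hp : 3 ≤ p) : ∃ p', PrevPrime p p' :=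
  ⟨Nat.findGreatest Nat.Prime (p - 1),
    Nat.findGreatest_spec (by omega) Nat.prime_two,
    by have := Nat.findGreatest_le (P := Nat.Prime) (p - 1); omega,
    fun _ hr hrp => Nat.le_findGreatest (by omega) hr⟩

theorem PrevPrime.lt_of_forall_prime_le {n p p' : ℕ} (h : PrevPrime p p')
    (hmin : ∀ q : ℕ, q.Prime → n ≤ q → p ≤ q) : p' < n := by
  by_contra! hle
  exact absurd (hmin p' h.1 hle) (not_le.2 h.2.1)

theorem stmt12
    (h : ∀ p p' : ℕ, p.Prime → 131 ≤ p → PrevPrime p p' → (p : ℝ) - p' < Real.sqrt p') :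
    ∀ n : ℕ, 131 ≤ n → ∃ r : ℕ, r.Prime ∧ (n : ℝ) - Real.sqrt n < r ∧ r < n := by
  intro n hn
  have hex : ∃ p, n ≤ p ∧ p.Prime := Nat.exists_infinite_primes n
  obtain ⟨hnp, hp⟩ := Nat.find_spec hex
  set p := Nat.find hex
  obtain ⟨p', hprev⟩ := exists_prevPrime (p := p) (by omega)
  have hp'n : p' < n :=
    hprev.lt_of_forall_prime_le fun q hq hnq => Nat.find_min' hex ⟨hnq, hq⟩
  have hgap := h p p' hp (by omega) hprev
  have hsqrt : Real.sqrt p' ≤ Real.sqrt n := Real.sqrt_le_sqrt (by exact_mod_cast hp'n.le)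
  have hnp' : (n : ℝ) ≤ p := by exact_mod_cast hnp
  exact ⟨p', hprev.1, by linarith, hp'n⟩
end
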